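/- Let Ω ⊆ ℝ² be open with x > 0 at every point (x,y) ∈ Ω, and let w, u, s : Ω → ℝ be C² functions satisfying on Ω: w_xx + w_yy − w_x/x = 0, u_x = −w_y/x, u_y = w_x/x, s_x = −(w_x² − w_y²)/(2x), and s_y = −w_x w_y/x (subscripts denote partial derivatives). Define v := 1/cosh(u) and q := s + log(cosh(u)). Then on Ω: (i) w_xx + w_yy − w_x/x = −2(v_x w_x + v_y w_y)/v, (ii) v_xx + v_yy + v_x/x = (v_x² + v_y²)/v − v³(w_x² + w_y²)/x², (iii) q_x = −v_x/v + (x/(2v²))(v_x² − v_y²) − (v²/(2x))(w_x² − w_y²), (iv) q_y = −v_y/v + x v_x v_y/v² − v² w_x w_y/x, and (v) v_x w_x + v_y w_y = 0. -/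

import Mathlib

/-- Partial derivative with respect to the first coordinate of `ℝ × ℝ`. -/
noncomputable def pdx (f : ℝ × ℝ → ℝ) (p : ℝ × ℝ) : ℝ := fderiv ℝ f p (1, 0)

/-- Partial derivative with respect to the second coordinate of `ℝ × ℝ`. -/
noncomputable def pdy (f : ℝ × ℝ → ℝ) (p : ℝ × ℝ) : ℝ := fderiv ℝ f p (0, 1)

/-!
With `v = sech u` we have `∇v = -sech u tanh u ∇u`, and the first-order relations
`u_x = -w_y/x`, `u_y = w_x/x` make `∇u ⟂ ∇w` and `|∇w|² = x²|∇u|²`. Orthogonality is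
Papapetrou's condition (v), and with the equation for `w` it gives (i). Symmetry of the Hessian
of `w` turns the same relations into `L u = 0` for `L = ∂ₓ² + ∂ᵧ² + x⁻¹ ∂ₓ`, so the chain rule
for `L` leaves `L (sech u) = sech''(u) |∇u|² = (sech u tanh² u - sech³ u) |∇u|²`, which is (ii).
Finally `q_x = s_x + tanh u · u_x`, `q_y = s_y + tanh u · u_y`, and (iii), (iv) reduce to
`tanh² u + sech² u = 1`.
-/

open Real Filter Topology

section ChainRule

variable {E : Type*} [NormedAddCommGroup E] [NormedSpace ℝ E]

theorem ContDiffAt.differentiableAt_fderiv_apply {u : E → ℝ} {p : E} (hu : ContDiffAt ℝ 2 u p)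
    (e : E) : DifferentiableAt ℝ (fun z => fderiv ℝ u z e) p :=
  ((hu.fderiv_right le_rfl).differentiableAt one_ne_zero).clm_apply (differentiableAt_const e)

theorem fderiv_fderiv_apply {w : E → ℝ} {p : E} (hw : DifferentiableAt ℝ (fderiv ℝ w) p)
    (e e' : E) : fderiv ℝ (fun z => fderiv ℝ w z e) p e' = fderiv ℝ (fderiv ℝ w) p e' e := by
  simp [fderiv_clm_apply hw (differentiableAt_const e)]

theorem fderiv_comp_apply_of_hasDerivAt {f : ℝ → ℝ} {f' : ℝ} {u : E → ℝ} {p : E}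
    (hf : HasDerivAt f f' (u p)) (hu : DifferentiableAt ℝ u p) (e : E) :
    fderiv ℝ (fun z => f (u z)) p e = f' * fderiv ℝ u p e := by
  have h : HasFDerivAt (fun z => f (u z)) (f' • fderiv ℝ u p) p :=
    hf.comp_hasFDerivAt p hu.hasFDerivAt
  rw [h.fderiv]
  rfl

theorem fderiv_add_comp_apply_of_hasDerivAt {f : ℝ → ℝ} {f' : ℝ} {s u : E → ℝ} {p : E}
    (hs : DifferentiableAt ℝ s p) (hf : HasDerivAt f f' (u p)) (hu : DifferentiableAt ℝ u p)
    (e : E) : fderiv ℝ (fun z => s z + f (u z)) p e = fderiv ℝ s p e + f' * fderiv ℝ u p e := by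
  have hfu : DifferentiableAt ℝ (fun z => f (u z)) p :=
    (hf.comp_hasFDerivAt p hu.hasFDerivAt).differentiableAt
  rw [fderiv_fun_add hs hfu, add_apply, fderiv_comp_apply_of_hasDerivAt hf hu]

theorem fderiv_fderiv_comp_apply_of_hasDerivAt {f f' f'' : ℝ → ℝ}
    (hf : ∀ t, HasDerivAt f (f' t) t) (hf' : ∀ t, HasDerivAt f' (f'' t) t) {u : E → ℝ} {p : E}
    (hu : ContDiffAt ℝ 2 u p) (e : E) :
    fderiv ℝ (fun z => fderiv ℝ (fun z => f (u z)) z e) p e =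
      f'' (u p) * fderiv ℝ u p e ^ 2 + f' (u p) * fderiv ℝ (fun z => fderiv ℝ u z e) p e := by
  have hnear : (fun z => fderiv ℝ (fun z => f (u z)) z e) =ᶠ[𝓝 p]
      fun z => f' (u z) * fderiv ℝ u z e := by
    filter_upwards [hu.eventually (by simp)] with z hz
    exact fderiv_comp_apply_of_hasDerivAt (hf _) (hz.differentiableAt two_ne_zero) e
  have hprod : HasFDerivAt (fun z => f' (u z) * fderiv ℝ u z e)
      (f' (u p) • fderiv ℝ (fun z => fderiv ℝ u z e) p +
        fderiv ℝ u p e • (f'' (u p) • fderiv ℝ u p)) p :=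
    ((hf' _).comp_hasFDerivAt p (hu.differentiableAt two_ne_zero).hasFDerivAt).mul
      (hu.differentiableAt_fderiv_apply e).hasFDerivAt
  rw [hnear.fderiv_eq, hprod.fderiv]
  simp only [add_apply, smul_apply, smul_eq_mul]
  ring

end ChainRule

section Plane

variable {u w g : ℝ × ℝ → ℝ} {p : ℝ × ℝ}

theorem pdx_pdy_comm (hw : ContDiffAt ℝ 2 w p) : pdx (pdy w) p = pdy (pdx w) p := by
  have hd := (hw.fderiv_right (m := 1) le_rfl).differentiableAt one_ne_zero
  change fderiv ℝ (fun z => fderiv ℝ w z (0, 1)) p (1, 0) =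
    fderiv ℝ (fun z => fderiv ℝ w z (1, 0)) p (0, 1)
  rw [fderiv_fderiv_apply hd, fderiv_fderiv_apply hd]
  exact hw.isSymmSndFDerivAt (by simp [minSmoothness_of_isRCLikeNormedField]) _ _

theorem pdx_neg : pdx (fun z => -g z) p = -pdx g p := by
  simp only [pdx, fderiv_fun_neg, neg_apply]

theorem fderiv_div_fst_apply (hg : DifferentiableAt ℝ g p) (hp : p.1 ≠ 0) (e : ℝ × ℝ) :
    fderiv ℝ (fun z => g z / z.1) p e = (fderiv ℝ g p e * p.1 - g p * e.1) / p.1 ^ 2 := by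
  have h : HasFDerivAt (fun z => g z * z.1⁻¹)
      (g p • (-(p.1 ^ 2)⁻¹ • ContinuousLinearMap.fst ℝ ℝ ℝ) + p.1⁻¹ • fderiv ℝ g p) p :=
    hg.hasFDerivAt.mul ((hasDerivAt_inv hp).comp_hasFDerivAt p hasFDerivAt_fst)
  simp only [div_eq_mul_inv, h.fderiv]
  simp only [add_apply, smul_apply, ContinuousLinearMap.coe_fst', smul_eq_mul]
  field_simp
  ring

theorem pdx_div_fst (hg : DifferentiableAt ℝ g p) (hp : p.1 ≠ 0) :
    pdx (fun z => g z / z.1) p = (pdx g p * p.1 - g p) / p.1 ^ 2 := by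
  simp [pdx, fderiv_div_fst_apply hg hp]

theorem pdy_div_fst (hg : DifferentiableAt ℝ g p) (hp : p.1 ≠ 0) :
    pdy (fun z => g z / z.1) p = pdy g p / p.1 := by
  simp [pdy, fderiv_div_fst_apply hg hp]
  field_simp

/-- The Laplacian of `ℝ³` acting on axisymmetric functions, in cylindrical coordinates with
radius `x` and height `y`. -/
noncomputable def cylLaplacian (f : ℝ × ℝ → ℝ) (p : ℝ × ℝ) : ℝ :=
  pdx (pdx f) p + pdy (pdy f) p + pdx f p / p.1

theorem cylLaplacian_comp {f f' f'' : ℝ → ℝ} (hf : ∀ t, HasDerivAt f (f' t) t)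
    (hf' : ∀ t, HasDerivAt f' (f'' t) t) (hu : ContDiffAt ℝ 2 u p) :
    cylLaplacian (fun z => f (u z)) p =
      f'' (u p) * (pdx u p ^ 2 + pdy u p ^ 2) + f' (u p) * cylLaplacian u p := by
  have hxx : pdx (pdx fun z => f (u z)) p = f'' (u p) * pdx u p ^ 2 + f' (u p) * pdx (pdx u) p :=
    fderiv_fderiv_comp_apply_of_hasDerivAt hf hf' hu _
  have hyy : pdy (pdy fun z => f (u z)) p = f'' (u p) * pdy u p ^ 2 + f' (u p) * pdy (pdy u) p :=
    fderiv_fderiv_comp_apply_of_hasDerivAt hf hf' hu _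
  have hx : pdx (fun z => f (u z)) p = f' (u p) * pdx u p :=
    fderiv_comp_apply_of_hasDerivAt (hf _) (hu.differentiableAt two_ne_zero) _
  rw [cylLaplacian, cylLaplacian, hxx, hyy, hx]
  ring

theorem cylLaplacian_eq_zero (hw : ContDiffAt ℝ 2 w p) (hp : p.1 ≠ 0)
    (hux : pdx u =ᶠ[𝓝 p] fun z => -pdy w z / z.1) (huy : pdy u =ᶠ[𝓝 p] fun z => pdx w z / z.1) :
    cylLaplacian u p = 0 := by
  have hwx : DifferentiableAt ℝ (pdx w) p := hw.differentiableAt_fderiv_apply (1, 0)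
  have hwy : DifferentiableAt ℝ (fun z => -pdy w z) p :=
    (hw.differentiableAt_fderiv_apply (0, 1)).neg
  have hxx : pdx (pdx u) p = (-pdx (pdy w) p * p.1 + pdy w p) / p.1 ^ 2 := by
    rw [pdx, hux.fderiv_eq, ← pdx, pdx_div_fst hwy hp, pdx_neg]
    ring
  have hyy : pdy (pdy u) p = pdy (pdx w) p / p.1 := by
    rw [pdy, huy.fderiv_eq, ← pdy, pdy_div_fst hwx hp]
  rw [cylLaplacian, hxx, hyy, hux.eq_of_nhds, pdx_pdy_comm hw]
  field_simp
  ring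

end Plane

theorem hasDerivAt_inv_cosh (t : ℝ) :
    HasDerivAt (fun t => (cosh t)⁻¹) (-(sinh t / cosh t ^ 2)) t :=
  ((hasDerivAt_cosh t).inv (cosh_pos t).ne').congr_deriv (by ring)

theorem hasDerivAt_neg_sinh_div_cosh_sq (t : ℝ) :
    HasDerivAt (fun t => -(sinh t / cosh t ^ 2))
      ((2 * sinh t ^ 2 - cosh t ^ 2) / cosh t ^ 3) t := by
  have hc := (cosh_pos t).ne'
  refine (((hasDerivAt_sinh t).fun_div ((hasDerivAt_cosh t).pow 2)
    (pow_ne_zero 2 hc)).neg).congr_deriv ?_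
  simp only [Pi.pow_apply]
  field_simp
  ring

theorem hasDerivAt_log_cosh (t : ℝ) : HasDerivAt (fun t => log (cosh t)) (tanh t) t :=
  ((hasDerivAt_cosh t).log (cosh_pos t).ne').congr_deriv (tanh_eq_sinh_div_cosh t).symm

/-- **Every solution of the reduced linear system yields a Papapetrou vacuum.**
If `(w, u, s)` solves `w_xx + w_yy − w_x/x = 0`, `u_x = −w_y/x`, `u_y = w_x/x`,
`s_x = −(w_x² − w_y²)/(2x)`, `s_y = −w_x w_y/x` on `Ω ⊆ {x > 0}`, then
`v := 1/cosh u` and `q := s + log cosh u` satisfy the reduced vacuum Einstein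
equations (i)–(iv) together with Papapetrou's condition (v). -/
theorem reduced_system_gives_papapetrou
    (Ω : Set (ℝ × ℝ)) (hΩ : IsOpen Ω) (hx : ∀ p ∈ Ω, 0 < p.1)
    (w u s : ℝ × ℝ → ℝ)
    (hw : ContDiffOn ℝ 2 w Ω) (hu : ContDiffOn ℝ 2 u Ω) (hs : ContDiffOn ℝ 2 s Ω)
    (hweq : ∀ p ∈ Ω, pdx (pdx w) p + pdy (pdy w) p - pdx w p / p.1 = 0)
    (hux : ∀ p ∈ Ω, pdx u p = -pdy w p / p.1)
    (huy : ∀ p ∈ Ω, pdy u p = pdx w p / p.1)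
    (hsx : ∀ p ∈ Ω, pdx s p = -((pdx w p) ^ 2 - (pdy w p) ^ 2) / (2 * p.1))
    (hsy : ∀ p ∈ Ω, pdy s p = -(pdx w p * pdy w p) / p.1)
    (v q : ℝ × ℝ → ℝ)
    (hv : ∀ p : ℝ × ℝ, v p = 1 / Real.cosh (u p))
    (hq : ∀ p : ℝ × ℝ, q p = s p + Real.log (Real.cosh (u p))) :
    ∀ p ∈ Ω,
      (pdx (pdx w) p + pdy (pdy w) p - pdx w p / p.1 =
        -2 * (pdx v p * pdx w p + pdy v p * pdy w p) / v p) ∧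
      (pdx (pdx v) p + pdy (pdy v) p + pdx v p / p.1 =
        ((pdx v p) ^ 2 + (pdy v p) ^ 2) / v p -
          (v p) ^ 3 * ((pdx w p) ^ 2 + (pdy w p) ^ 2) / p.1 ^ 2) ∧
      (pdx q p = -pdx v p / v p + (p.1 / (2 * (v p) ^ 2)) * ((pdx v p) ^ 2 - (pdy v p) ^ 2)
        - ((v p) ^ 2 / (2 * p.1)) * ((pdx w p) ^ 2 - (pdy w p) ^ 2)) ∧
      (pdy q p = -pdy v p / v p + p.1 * pdx v p * pdy v p / (v p) ^ 2
        - (v p) ^ 2 * pdx w p * pdy w p / p.1) ∧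
      (pdx v p * pdx w p + pdy v p * pdy w p = 0) := by
  intro p hp
  have hnhds := hΩ.mem_nhds hp
  have hp1 : p.1 ≠ 0 := (hx p hp).ne'
  have huC := hu.contDiffAt hnhds
  have hud := huC.differentiableAt two_ne_zero
  have hvfun : v = fun z => (cosh (u z))⁻¹ := funext fun z => by rw [hv, one_div]
  have hvx : pdx v p = -(sinh (u p) / cosh (u p) ^ 2) * pdx u p :=
    hvfun ▸ fderiv_comp_apply_of_hasDerivAt (hasDerivAt_inv_cosh _) hud _
  have hvy : pdy v p = -(sinh (u p) / cosh (u p) ^ 2) * pdy u p :=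
    hvfun ▸ fderiv_comp_apply_of_hasDerivAt (hasDerivAt_inv_cosh _) hud _
  have hLv := hvfun ▸ cylLaplacian_comp hasDerivAt_inv_cosh hasDerivAt_neg_sinh_div_cosh_sq huC
  rw [cylLaplacian_eq_zero (hw.contDiffAt hnhds) hp1 (eventuallyEq_of_mem hnhds hux)
    (eventuallyEq_of_mem hnhds huy), cylLaplacian] at hLv
  have hsd := (hs.contDiffAt hnhds).differentiableAt two_ne_zero
  have hqx : pdx q p = pdx s p + tanh (u p) * pdx u p :=
    funext hq ▸ fderiv_add_comp_apply_of_hasDerivAt hsd (hasDerivAt_log_cosh _) hud _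
  have hqy : pdy q p = pdy s p + tanh (u p) * pdy u p :=
    funext hq ▸ fderiv_add_comp_apply_of_hasDerivAt hsd (hasDerivAt_log_cosh _) hud _
  have hwx : pdx w p = p.1 * pdy u p := by rw [huy p hp]; field_simp
  have hwy : pdy w p = -(p.1 * pdx u p) := by rw [hux p hp]; field_simp
  have hid := cosh_sq_sub_sinh_sq (u p)
  have hPap : pdx v p * pdx w p + pdy v p * pdy w p = 0 := by rw [hvx, hvy, hwx, hwy]; ring
  refine ⟨by rw [hweq p hp, hPap]; simp, ?_, ?_, ?_, hPap⟩
  · rw [hLv, hvx, hvy, hv, hwx, hwy]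
    field_simp
    linear_combination -(pdx u p ^ 2 + pdy u p ^ 2) * hid
  · rw [hqx, hsx p hp, hvx, hvy, hv, hwx, hwy, tanh_eq_sinh_div_cosh]
    field_simp
    linear_combination -(p.1 * (pdy u p ^ 2 - pdx u p ^ 2)) * hid
  · rw [hqy, hsy p hp, hvx, hvy, hv, hwx, hwy, tanh_eq_sinh_div_cosh]
    field_simp
    linear_combination p.1 * pdx u p * pdy u p * hid
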